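/- Let A ⊆ Φ⁺ be separable, i.e., cone(A) ∩ cone(Φ⁺ \ A) = {0}. Then A is biconvex: both A and Φ⁺ \ A are convex. -/

import Mathlib

open Pointwise

noncomputable section

/-- The set of nonnegative linear combinations of elements of `X`. -/
def coneOf {V : Type*} [AddCommGroup V] [Module ℝ V] (X : Set V) : Set V :=
  {v | ∃ (n : ℕ) (c : Fin n → ℝ) (f : Fin n → V),
    (∀ i, 0 ≤ c i) ∧ (∀ i, f i ∈ X) ∧ ∑ i, c i • f i = v}

/-- A geometric representation of the Coxeter system `cs` on the real quadratic
space `(V, bil)`: each simple generator acts as the `bil`-reflection in its simple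
root, and the simple roots form a simple system. -/
structure GeomRep {B : Type*} [Fintype B] {W : Type*} [Group W]
    (M : CoxeterMatrix B) (cs : CoxeterSystem M W)
    (V : Type*) [AddCommGroup V] [Module ℝ V] where
  /-- the symmetric bilinear form -/
  bil : LinearMap.BilinForm ℝ V
  bil_symm : ∀ u v : V, bil u v = bil v u
  /-- the representation of `W` by linear automorphisms of `V` -/
  π : W →* (V ≃ₗ[ℝ] V)
  /-- the simple roots -/
  α : B → V
  norm_one : ∀ i, bil (α i) (α i) = 1
  simple_refl : ∀ i v, π (cs.simple i) v = v - (2 * bil (α i) v) • α i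
  pos_indep : ∀ c : B → ℝ, (∀ i, 0 ≤ c i) → ∑ i, c i • α i = 0 → ∀ i, c i = 0
  angle_finite : ∀ i j, i ≠ j → M.M i j ≠ 0 →
    bil (α i) (α j) = - Real.cos (Real.pi / (M.M i j : ℝ))
  angle_infinite : ∀ i j, i ≠ j → M.M i j = 0 → bil (α i) (α j) ≤ -1

namespace GeomRep

variable {B : Type*} [Fintype B] {W : Type*} [Group W]
  {M : CoxeterMatrix B} {cs : CoxeterSystem M W}
  {V : Type*} [AddCommGroup V] [Module ℝ V]

/-- The root system `Φ = W(Δ)`. -/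
def Phi (G : GeomRep M cs V) : Set V := {v | ∃ (w : W) (i : B), G.π w (G.α i) = v}

/-- The positive roots `Φ⁺ = cone(Δ) ∩ Φ`. -/
def PhiPos (G : GeomRep M cs V) : Set V := G.Phi ∩ coneOf (Set.range G.α)

/-- The (left) inversion set `N(w) = Φ⁺ ∩ w(Φ⁻)`. -/
def N (G : GeomRep M cs V) (w : W) : Set V := G.PhiPos ∩ (G.π w '' (-G.PhiPos))

/-- `A ⊆ Φ⁺` is closed if for all `α, β ∈ A`, every root in `cone(α,β)` lies in `A`. -/
def IsClosedSet (G : GeomRep M cs V) (A : Set V) : Prop :=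
  ∀ a ∈ A, ∀ b ∈ A, coneOf {a, b} ∩ G.Phi ⊆ A

/-- `A` is biclosed if `A` and `Φ⁺ \ A` are both closed. -/
def IsBiclosed (G : GeomRep M cs V) (A : Set V) : Prop :=
  G.IsClosedSet A ∧ G.IsClosedSet (G.PhiPos \ A)

/-- `A` is convex if `A = cone(A) ∩ Φ`. -/
def IsConvexSet (G : GeomRep M cs V) (A : Set V) : Prop :=
  A = coneOf A ∩ G.Phi

/-- `A` is biconvex if `A` and `Φ⁺ \ A` are both convex. -/
def IsBiconvex (G : GeomRep M cs V) (A : Set V) : Prop :=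
  G.IsConvexSet A ∧ G.IsConvexSet (G.PhiPos \ A)

/-- `A ⊆ Φ⁺` is separable if `cone(A) ∩ cone(Φ⁺ \ A) = {0}`. -/
def IsSeparable (G : GeomRep M cs V) (A : Set V) : Prop :=
  coneOf A ∩ coneOf (G.PhiPos \ A) = {0}

end GeomRep

/-- The right weak order on a Coxeter group. -/
def WeakLE {B : Type*} {W : Type*} [Group W] {M : CoxeterMatrix B}
    (cs : CoxeterSystem M W) (u w : W) : Prop :=
  cs.length u + cs.length (u⁻¹ * w) = cs.length w

section Cone

variable {V : Type*} [AddCommGroup V] [Module ℝ V]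

lemma zero_mem_coneOf (X : Set V) : (0 : V) ∈ coneOf X :=
  ⟨0, ![], ![], by simp, by simp, by simp⟩

lemma mem_coneOf_of_mem {X : Set V} {a : V} (ha : a ∈ X) : a ∈ coneOf X :=
  ⟨1, fun _ => 1, fun _ => a, fun _ => zero_le_one, fun _ => ha, by simp⟩

lemma add_mem_coneOf {X : Set V} {v w : V} (hv : v ∈ coneOf X) (hw : w ∈ coneOf X) :
    v + w ∈ coneOf X := by
  obtain ⟨n, c, f, hc, hf, rfl⟩ := hv
  obtain ⟨m, d, g, hd, hg, rfl⟩ := hw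
  refine ⟨n + m, Fin.append c d, Fin.append f g, fun i => ?_, fun i => ?_, ?_⟩
  · cases i using Fin.addCases <;> simp [hc, hd]
  · cases i using Fin.addCases <;> simp [hf, hg]
  · simp [Fin.sum_univ_add]

lemma smul_mem_coneOf {X : Set V} {t : ℝ} (ht : 0 ≤ t) {v : V} (hv : v ∈ coneOf X) :
    t • v ∈ coneOf X := by
  obtain ⟨n, c, f, hc, hf, rfl⟩ := hv
  refine ⟨n, fun i => t * c i, f, fun i => mul_nonneg ht (hc i), hf, ?_⟩
  simp [mul_smul, Finset.smul_sum]

lemma coneOf_subset_coneOf {X Y : Set V} (h : X ⊆ coneOf Y) : coneOf X ⊆ coneOf Y := by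
  rintro v ⟨n, c, f, hc, hf, rfl⟩
  exact Finset.sum_induction _ (· ∈ coneOf Y) (fun _ _ => add_mem_coneOf)
    (zero_mem_coneOf Y) fun i _ => smul_mem_coneOf (hc i) (h (hf i))

end Cone

namespace GeomRep

variable {B : Type*} [Fintype B] {W : Type*} [Group W]
  {M : CoxeterMatrix B} {cs : CoxeterSystem M W}
  {V : Type*} [AddCommGroup V] [Module ℝ V] (G : GeomRep M cs V) {A : Set V}

lemma α_ne_zero (i : B) : G.α i ≠ 0 := fun h => by
  simpa [h] using G.norm_one i

lemma ne_zero_of_mem_Phi {v : V} (hv : v ∈ G.Phi) : v ≠ 0 := by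
  obtain ⟨w, i, rfl⟩ := hv
  exact (LinearEquiv.map_ne_zero_iff _).2 (G.α_ne_zero i)

lemma coneOf_subset_coneOf_α (hA : A ⊆ G.PhiPos) : coneOf A ⊆ coneOf (Set.range G.α) :=
  coneOf_subset_coneOf fun _ ha => (hA ha).2

variable {G}

lemma IsSeparable.diff (hsep : G.IsSeparable A) (hA : A ⊆ G.PhiPos) :
    G.IsSeparable (G.PhiPos \ A) := by
  rw [IsSeparable, Set.sdiff_sdiff_cancel_left hA, Set.inter_comm]
  exact hsep

/-- A root in `cone(A)` but not in `A` would also lie in `cone(Φ⁺ \ A)`, hence be `0`. -/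
lemma IsSeparable.isConvexSet (hsep : G.IsSeparable A) (hA : A ⊆ G.PhiPos) :
    G.IsConvexSet A := by
  refine Set.Subset.antisymm (fun a ha => ⟨mem_coneOf_of_mem ha, (hA ha).1⟩) ?_
  rintro v ⟨hvA, hvΦ⟩
  by_contra hv
  have hv0 : v ∈ coneOf A ∩ coneOf (G.PhiPos \ A) :=
    ⟨hvA, mem_coneOf_of_mem ⟨⟨hvΦ, G.coneOf_subset_coneOf_α hA hvA⟩, hv⟩⟩
  rw [hsep] at hv0
  exact G.ne_zero_of_mem_Phi hvΦ hv0

end GeomRep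

/-- A separable subset of `Φ⁺` is biconvex. -/
theorem stmt6 {B : Type*} [Fintype B] {W : Type*} [Group W]
    {M : CoxeterMatrix B} {cs : CoxeterSystem M W}
    {V : Type*} [AddCommGroup V] [Module ℝ V] (G : GeomRep M cs V)
    (A : Set V) (hA : A ⊆ G.PhiPos) (hsep : G.IsSeparable A) : G.IsBiconvex A :=
  ⟨hsep.isConvexSet hA, (hsep.diff hA).isConvexSet Set.sdiff_subset⟩
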